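/- arXiv:2510.22393 — 2 statements merged into one kernel-verified Lean document; each statement's English description precedes it below -/
import Mathlib

section
/- Let 1 ≤ p < n and assume δ_p := λ_p − λ_{p+1} > 0. Then M₁ ≤ 8‖E‖/δ_p. -/
open Matrix

/-- The spectral norm (ℓ²→ℓ² operator norm) of a matrix. -/
noncomputable def specNorm {𝕜 : Type*} [RCLike 𝕜] {m n : ℕ}
    (M : Matrix (Fin m) (Fin n) 𝕜) : ℝ :=
  ‖LinearMap.toContinuousLinearMap (Matrix.toEuclideanLin M)‖

/-- The resolvent `(zI − A)⁻¹` of a real matrix `A`, regarded as a complex matrix. -/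
noncomputable def res {n : ℕ} (A : Matrix (Fin n) (Fin n) ℝ) (z : ℂ) :
    Matrix (Fin n) (Fin n) ℂ :=
  (z • (1 : Matrix (Fin n) (Fin n) ℂ) - A.map Complex.ofReal)⁻¹

/-!
The point `x₀` is the midpoint of the gap `(λ_{p+1}, λ_p)`, so every eigenvalue is at distance at
least `δ_p/2` from it, and `z = x₀ + it` is at distance at least `√((δ_p/2)² + t²)` from the
spectrum. Expanding in the orthonormal eigenbasis, `‖(zI − A)⁻¹‖` is at most the reciprocal of this
distance, so the integrand is at most `‖E‖ / ((δ_p/2)² + t²)`. Its integral over all of `ℝ` is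
`2π‖E‖/δ_p ≤ 8‖E‖/δ_p`.
-/

open scoped Matrix.Norms.L2Operator

section

variable {𝕜 : Type*} [RCLike 𝕜] {ι κ : Type*} [Fintype ι] [DecidableEq ι] [Fintype κ]

lemma specNorm_eq_l2_opNorm {m n : ℕ} (M : Matrix (Fin m) (Fin n) 𝕜) : specNorm M = ‖M‖ := rfl

lemma specNorm_nonneg {m n : ℕ} (M : Matrix (Fin m) (Fin n) 𝕜) : 0 ≤ specNorm M := norm_nonneg M

omit [DecidableEq ι] in
lemma EuclideanSpace.norm_sq_eq_re_add_im (w : ι → ℂ) :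
    ‖WithLp.toLp 2 w‖ ^ 2 =
      ‖WithLp.toLp 2 fun i ↦ (w i).re‖ ^ 2 + ‖WithLp.toLp 2 fun i ↦ (w i).im‖ ^ 2 := by
  simp only [EuclideanSpace.norm_sq_eq, ← Finset.sum_add_distrib]
  refine Finset.sum_congr rfl fun i _ ↦ ?_
  rw [Complex.sq_norm, Complex.normSq_apply, Real.norm_eq_abs, Real.norm_eq_abs, sq_abs, sq_abs,
    sq, sq]

lemma Matrix.l2_opNorm_map_ofReal_le (E : Matrix κ ι ℝ) : ‖E.map Complex.ofReal‖ ≤ ‖E‖ := by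
  refine ContinuousLinearMap.opNorm_le_bound _ (norm_nonneg E) fun v ↦ ?_
  change ‖WithLp.toLp 2 (E.map Complex.ofReal *ᵥ v.ofLp)‖ ≤ ‖E‖ * ‖WithLp.toLp 2 v.ofLp‖
  set x : ι → ℝ := fun j ↦ (v j).re
  set y : ι → ℝ := fun j ↦ (v j).im
  have hre : (fun i ↦ (E.map Complex.ofReal *ᵥ v.ofLp) i |>.re) = E *ᵥ x := by
    ext i; simp [x, Matrix.mulVec, dotProduct, Complex.re_sum]
  have him : (fun i ↦ (E.map Complex.ofReal *ᵥ v.ofLp) i |>.im) = E *ᵥ y := by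
    ext i; simp [y, Matrix.mulVec, dotProduct, Complex.im_sum]
  have hE (z : ι → ℝ) : ‖WithLp.toLp 2 (E *ᵥ z)‖ ≤ ‖E‖ * ‖WithLp.toLp 2 z‖ :=
    E.l2_opNorm_mulVec (WithLp.toLp 2 z)
  refine le_of_pow_le_pow_left₀ two_ne_zero (by positivity) ?_
  calc ‖WithLp.toLp 2 (E.map Complex.ofReal *ᵥ v.ofLp)‖ ^ 2
      = ‖WithLp.toLp 2 (E *ᵥ x)‖ ^ 2 + ‖WithLp.toLp 2 (E *ᵥ y)‖ ^ 2 := by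
        rw [EuclideanSpace.norm_sq_eq_re_add_im, hre, him]
    _ ≤ (‖E‖ * ‖WithLp.toLp 2 x‖) ^ 2 + (‖E‖ * ‖WithLp.toLp 2 y‖) ^ 2 := by
        gcongr <;> apply hE
    _ = (‖E‖ * ‖WithLp.toLp 2 v.ofLp‖) ^ 2 := by
        rw [mul_pow, mul_pow, mul_pow, EuclideanSpace.norm_sq_eq_re_add_im]; ring

omit [DecidableEq ι] in
lemma OrthonormalBasis.mul_norm_le_norm_apply {E : Type*} [NormedAddCommGroup E]
    [InnerProductSpace 𝕜 E] (b : OrthonormalBasis ι 𝕜 E) (T : E →ₗ[𝕜] E) (μ : ι → 𝕜)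
    (hT : ∀ i, T (b i) = μ i • b i) {c : ℝ} (hc : 0 ≤ c) (hμ : ∀ i, c ≤ ‖μ i‖) (x : E) :
    c * ‖x‖ ≤ ‖T x‖ := by
  have hTx : T x = b.repr.symm (WithLp.toLp 2 fun i ↦ μ i * b.repr x i) := by
    rw [← b.sum_repr_symm]
    conv_lhs => rw [← b.sum_repr x]
    simp only [map_sum, map_smul, hT, smul_smul, mul_comm]
  rw [hTx, LinearIsometryEquiv.norm_map, ← b.repr.norm_map x]
  refine le_of_pow_le_pow_left₀ two_ne_zero (norm_nonneg _) ?_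
  rw [mul_pow, EuclideanSpace.norm_sq_eq, EuclideanSpace.norm_sq_eq, Finset.mul_sum]
  gcongr with i
  rw [PiLp.toLp_apply, norm_mul, mul_pow]
  gcongr
  exact hμ i

lemma Matrix.l2_opNorm_inv_le_of_mul_norm_le (B : Matrix ι ι 𝕜) {c : ℝ} (hc : 0 < c)
    (hB : ∀ x, c * ‖WithLp.toLp 2 x‖ ≤ ‖WithLp.toLp 2 (B *ᵥ x)‖) : ‖B⁻¹‖ ≤ c⁻¹ := by
  have hdet : IsUnit B.det := by
    refine isUnit_iff_ne_zero.2 fun h0 ↦ ?_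
    obtain ⟨v, hv, hBv⟩ := Matrix.exists_mulVec_eq_zero_iff.2 h0
    have : c * ‖WithLp.toLp 2 v‖ ≤ 0 := by simpa [hBv] using hB v
    exact hv (by simpa using nonpos_of_mul_nonpos_right this hc)
  refine ContinuousLinearMap.opNorm_le_bound _ (inv_nonneg.2 hc.le) fun y ↦ ?_
  change ‖WithLp.toLp 2 (B⁻¹ *ᵥ y.ofLp)‖ ≤ c⁻¹ * ‖WithLp.toLp 2 y.ofLp‖
  rw [inv_mul_eq_div, le_div_iff₀' hc]
  simpa [Matrix.mulVec_mulVec, Matrix.mul_nonsing_inv _ hdet] using hB (B⁻¹ *ᵥ y.ofLp)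

lemma orthonormal_toLp_ofReal {v : ι → ι → ℝ}
    (hv : ∀ i j, v i ⬝ᵥ v j = if i = j then 1 else 0) :
    Orthonormal ℂ fun i ↦ WithLp.toLp 2 fun k ↦ (v i k : ℂ) := by
  rw [orthonormal_iff_ite]
  intro i j
  have := congrArg Complex.ofReal (hv i j)
  push_cast [dotProduct] at this
  simpa [PiLp.inner_apply, mul_comm, apply_ite Complex.ofReal] using this

omit [DecidableEq ι] in
lemma Matrix.map_ofReal_mulVec {m : Type*} (A : Matrix m ι ℝ) (x : ι → ℝ) :
    A.map Complex.ofReal *ᵥ (fun j ↦ (x j : ℂ)) = fun i ↦ ((A *ᵥ x) i : ℂ) :=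
  funext fun i ↦ (Complex.ofRealHom.map_mulVec A x i).symm

lemma Matrix.l2_opNorm_inv_smul_one_sub_map_ofReal_le (A : Matrix ι ι ℝ) (v : ι → ι → ℝ)
    (μ : ι → ℝ) (hv : ∀ i j, v i ⬝ᵥ v j = if i = j then 1 else 0)
    (hAv : ∀ i, A *ᵥ v i = μ i • v i) (z : ℂ) {c : ℝ} (hc : 0 < c)
    (hz : ∀ i, c ≤ ‖z - μ i‖) :
    ‖(z • 1 - A.map Complex.ofReal)⁻¹‖ ≤ c⁻¹ := by
  have hon := orthonormal_toLp_ofReal hv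
  let b : OrthonormalBasis ι ℂ (EuclideanSpace ℂ ι) := .mk hon
    (hon.linearIndependent.span_eq_top_of_card_eq_finrank' (by simp)).ge
  have hb : ∀ i, Matrix.toLpLin 2 2 (z • 1 - A.map Complex.ofReal) (b i) = (z - μ i) • b i := by
    intro i
    rw [OrthonormalBasis.coe_mk, Matrix.toLpLin_toLp, Matrix.toLin'_apply, Matrix.sub_mulVec,
      Matrix.map_ofReal_mulVec, hAv]
    ext k
    simp [sub_mul, Matrix.smul_mulVec]
  refine Matrix.l2_opNorm_inv_le_of_mul_norm_le _ hc fun x ↦ ?_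
  simpa only [Matrix.toLpLin_toLp, Matrix.toLin'_apply]
    using b.mul_norm_le_norm_apply _ _ hb hc.le hz (WithLp.toLp 2 x)

end

open Real in
lemma integral_inv_sq_add_sq_le (a b : ℝ) {c : ℝ} (hc : 0 < c) :
    ∫ t in a..b, (c ^ 2 + t ^ 2)⁻¹ ≤ π / c := by
  rw [integral_inv_sq_add_sq hc.ne', inv_mul_eq_div]
  gcongr
  linarith [arctan_lt_pi_div_two (b / c), neg_pi_div_two_lt_arctan (a / c)]

lemma intervalIntegral.integral_mono_of_nonneg {f g : ℝ → ℝ} {a b : ℝ} (hab : a ≤ b)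
    (hf : ∀ x, 0 ≤ f x) (hg : IntervalIntegrable g MeasureTheory.volume a b)
    (hfg : ∀ x, f x ≤ g x) : ∫ x in a..b, f x ≤ ∫ x in a..b, g x := by
  rw [intervalIntegral.integral_of_le hab, intervalIntegral.integral_of_le hab]
  exact MeasureTheory.integral_mono_of_nonneg (.of_forall hf) hg.1 (.of_forall hfg)

open Real in
lemma integral_le_mul_pi_div_of_le_mul_inv_sq_add_sq {f : ℝ → ℝ} {a b c C : ℝ} (hab : a ≤ b)
    (hc : 0 < c) (hC : 0 ≤ C) (hf₀ : ∀ t, 0 ≤ f t) (hf : ∀ t, f t ≤ C * (c ^ 2 + t ^ 2)⁻¹) :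
    ∫ t in a..b, f t ≤ C * (π / c) := by
  have hcont : Continuous fun t : ℝ ↦ C * (c ^ 2 + t ^ 2)⁻¹ :=
    continuous_const.mul <| (by fun_prop : Continuous fun t : ℝ ↦ c ^ 2 + t ^ 2).inv₀
      fun t ↦ by positivity
  calc ∫ t in a..b, f t ≤ ∫ t in a..b, C * (c ^ 2 + t ^ 2)⁻¹ :=
        intervalIntegral.integral_mono_of_nonneg hab hf₀ (hcont.intervalIntegrable a b) hf
    _ = C * ∫ t in a..b, (c ^ 2 + t ^ 2)⁻¹ := intervalIntegral.integral_const_mul _ _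
    _ ≤ C * (π / c) := by grw [integral_inv_sq_add_sq_le a b hc]

lemma AntitoneOn.half_gap_le_abs_sub_midpoint {lam : ℕ → ℝ} {s : Set ℕ} (h : AntitoneOn lam s)
    {p i : ℕ} (hp : p ∈ s) (hp' : p + 1 ∈ s) (hi : i ∈ s) :
    (lam p - lam (p + 1)) / 2 ≤ |(lam p + lam (p + 1)) / 2 - lam i| := by
  rcases le_or_gt i p with hip | hpi
  · have := h hi hp hip
    rw [abs_sub_comm, le_abs]
    left; linarith
  · have := h hp' hi hpi
    rw [le_abs]
    left; linarith

lemma Complex.sqrt_sq_add_sq_le_norm_add_mul_I_sub {a x t μ : ℝ} (ha : 0 ≤ a)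
    (h : a ≤ |x - μ|) : √(a ^ 2 + t ^ 2) ≤ ‖(x + t * I : ℂ) - μ‖ := by
  rw [show (x + t * I : ℂ) - μ = ((x - μ : ℝ) : ℂ) + t * I by push_cast; ring, norm_add_mul_I]
  have : a ^ 2 ≤ (x - μ) ^ 2 := by simpa only [sq_abs] using pow_le_pow_left₀ ha h 2
  exact Real.sqrt_le_sqrt (by linarith)

lemma specNorm_res_mul_mul_res_le {n : ℕ} (A E : Matrix (Fin n) (Fin n) ℝ)
    (v : Fin n → Fin n → ℝ) (μ : Fin n → ℝ) (hv : ∀ i j, v i ⬝ᵥ v j = if i = j then 1 else 0)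
    (hAv : ∀ i, A *ᵥ v i = μ i • v i) (z : ℂ) {c : ℝ} (hc : 0 < c)
    (hz : ∀ i, c ≤ ‖z - μ i‖) :
    specNorm (res A z * E.map Complex.ofReal * res A z) ≤ specNorm E * (c ^ 2)⁻¹ := by
  have hres : ‖res A z‖ ≤ c⁻¹ :=
    Matrix.l2_opNorm_inv_smul_one_sub_map_ofReal_le A v μ hv hAv z hc hz
  simp only [specNorm_eq_l2_opNorm]
  calc ‖res A z * E.map Complex.ofReal * res A z‖
      ≤ ‖res A z‖ * ‖E.map Complex.ofReal‖ * ‖res A z‖ := by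
        grw [Matrix.l2_opNorm_mul, Matrix.l2_opNorm_mul]
    _ ≤ c⁻¹ * ‖E‖ * c⁻¹ := by
        gcongr
        exact E.l2_opNorm_map_ofReal_le
    _ = ‖E‖ * (c ^ 2)⁻¹ := by ring

theorem M1_crude_bound_general
    {n : ℕ} (A E : Matrix (Fin n) (Fin n) ℝ)
    (lam : ℕ → ℝ)
    (hlam_mono : ∀ i ∈ Finset.Icc 1 n, ∀ j ∈ Finset.Icc 1 n, i ≤ j → lam j ≤ lam i)
    (u : ℕ → (Fin n → ℝ))
    (hu_on : ∀ i ∈ Finset.Icc 1 n, ∀ j ∈ Finset.Icc 1 n,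
      u i ⬝ᵥ u j = if i = j then 1 else 0)
    (hu_eig : ∀ i ∈ Finset.Icc 1 n, A *ᵥ u i = lam i • u i)
    (p : ℕ) (hp1 : 1 ≤ p) (hpn : p < n)
    (δp : ℝ) (hδp : δp = lam p - lam (p + 1)) (hδp_pos : 0 < δp)
    (x₀ T : ℝ) (hx₀ : x₀ = lam p - δp / 2) (hT : T = 2 * specNorm A)
    (M1 : ℝ)
    (hM1 : M1 = ∫ t in (-T)..T, specNorm
      (res A (x₀ + t * Complex.I) * E.map Complex.ofReal
        * res A (x₀ + t * Complex.I))) :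
    M1 ≤ 8 * specNorm E / δp := by
  have hmem (i : Fin n) : (i : ℕ) + 1 ∈ Finset.Icc 1 n := Finset.mem_Icc.2 ⟨by omega, i.isLt⟩
  have hv (i j : Fin n) : u (i + 1) ⬝ᵥ u (j + 1) = if i = j then 1 else 0 := by
    simp [hu_on _ (hmem i) _ (hmem j), Fin.val_inj]
  have hgap (i : Fin n) : δp / 2 ≤ |x₀ - lam (i + 1)| := by
    have := AntitoneOn.half_gap_le_abs_sub_midpoint (s := Finset.Icc 1 n) hlam_mono
      (Finset.mem_Icc.2 ⟨hp1, hpn.le⟩) (Finset.mem_Icc.2 ⟨by omega, hpn⟩) (hmem i)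
    convert this using 2
    linarith
  have hpt (t : ℝ) : specNorm (res A (x₀ + t * Complex.I) * E.map Complex.ofReal
      * res A (x₀ + t * Complex.I)) ≤ specNorm E * ((δp / 2) ^ 2 + t ^ 2)⁻¹ := by
    have := specNorm_res_mul_mul_res_le A E (fun i ↦ u (i + 1)) (fun i ↦ lam (i + 1)) hv
      (fun i ↦ hu_eig _ (hmem i)) _ (by positivity : 0 < √((δp / 2) ^ 2 + t ^ 2))
      fun i ↦ Complex.sqrt_sq_add_sq_le_norm_add_mul_I_sub (by positivity) (hgap i)
    rwa [Real.sq_sqrt (by positivity)] at this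
  rw [hM1]
  calc _ ≤ specNorm E * (Real.pi / (δp / 2)) :=
        integral_le_mul_pi_div_of_le_mul_inv_sq_add_sq (by linarith [specNorm_nonneg A])
          (by positivity) (specNorm_nonneg E) (fun _ ↦ specNorm_nonneg _) hpt
    _ = 2 * Real.pi * specNorm E / δp := by field_simp
    _ ≤ 8 * specNorm E / δp := by
        gcongr ?_ * _ / _
        · exact specNorm_nonneg E
        · linarith [Real.pi_le_four]

/-- **Crude bound `M₁ ≤ 8‖E‖/δ_p`** (Remark 4.4 of the paper). Indices are
1-based; `x₀ = λ_p − δ_p/2`, `T = 2σ₁` with `σ₁ = ‖A‖`. -/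
theorem M1_crude_bound
    {n : ℕ} (A E : Matrix (Fin n) (Fin n) ℝ) (hA : A.IsSymm) (hE : E.IsSymm)
    (lam : ℕ → ℝ)
    (hlam_mono : ∀ i ∈ Finset.Icc 1 n, ∀ j ∈ Finset.Icc 1 n, i ≤ j → lam j ≤ lam i)
    (u : ℕ → (Fin n → ℝ))
    (hu_on : ∀ i ∈ Finset.Icc 1 n, ∀ j ∈ Finset.Icc 1 n,
      u i ⬝ᵥ u j = if i = j then 1 else 0)
    (hu_eig : ∀ i ∈ Finset.Icc 1 n, A *ᵥ u i = lam i • u i)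
    (p : ℕ) (hp1 : 1 ≤ p) (hpn : p < n)
    (δp : ℝ) (hδp : δp = lam p - lam (p + 1)) (hδp_pos : 0 < δp)
    (x₀ T : ℝ) (hx₀ : x₀ = lam p - δp / 2) (hT : T = 2 * specNorm A)
    (M1 : ℝ)
    (hM1 : M1 = ∫ t in (-T)..T, specNorm
      (res A (x₀ + t * Complex.I) * E.map Complex.ofReal
        * res A (x₀ + t * Complex.I))) :
    M1 ≤ 8 * specNorm E / δp :=
  M1_crude_bound_general A E lam hlam_mono u hu_on hu_eig p hp1 hpn δp hδp hδp_pos x₀ T hx₀ hT M1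
    hM1
end

section
/- Let 1 ≤ p < n, let r be an integer with p ≤ r < n such that |λ_p|/2 ≤ λ_p − λ_{r+1}, and assume 0 < 4‖E‖ ≤ δ_p := λ_p − λ_{p+1} ≤ |λ_p|/4. With x₀ = λ_p − δ_p/2 and T = 2σ₁, one has ∫_{−T}^{T} ‖ Σ over pairs (i,j) with exactly one of i,j in {1,…,r} of ( (u_iᵀ E u_j)/((x₀+it−λ_i)(x₀+it−λ_j)) ) u_i u_jᵀ ‖ dt ≤ (64‖E‖/|λ_p|)·log( (2T+δ_p)/δ_p ). -/
/-!
With `F(z) = ∑_{i ≤ r} (z - λ_i)⁻¹ u_i u_iᵀ` and `G(z) = ∑_{j > r} (z - λ_j)⁻¹ u_j u_jᵀ`, the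
cross term is `F E G + G E F`, and by orthonormality `‖F‖`, `‖G‖` are bounded by their largest
coefficients. Since `x₀` is the midpoint of the gap `(λ_{p+1}, λ_p)`,
`‖F(x₀ + it)‖ ≤ (δ_p²/4 + t²)^{-1/2}`; since `λ_j ≤ λ_{r+1} ≤ λ_p - |λ_p|/2` for `j > r` and
`δ_p ≤ |λ_p|/4`, `‖G‖ ≤ 8/(3|λ_p|)`. Finally `(δ_p²/4 + t²)^{-1/2}` integrates over `[-T, T]` to
`2 arsinh (2T/δ_p) ≤ 4 log ((2T + δ_p)/δ_p)`.
-/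

open Matrix

open scoped Matrix.Norms.L2Operator
open Finset

theorem specNorm_eq_norm {𝕜 : Type*} [RCLike 𝕜] {m n : ℕ} (M : Matrix (Fin m) (Fin n) 𝕜) :
    specNorm M = ‖M‖ :=
  rfl

theorem EuclideanSpace.norm_sq_eq_norm_sq_re_add_norm_sq_im {m : Type*} [Fintype m]
    (y : EuclideanSpace ℂ m) :
    ‖y‖ ^ 2
      = ‖WithLp.toLp 2 (fun k => (y k).re)‖ ^ 2 + ‖WithLp.toLp 2 (fun k => (y k).im)‖ ^ 2 := by
  simp only [EuclideanSpace.norm_sq_eq, ← sum_add_distrib, Complex.sq_norm,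
    Complex.normSq_apply, Real.norm_eq_abs, sq_abs]
  simp [sq]

theorem Matrix.l2_opNorm_map_ofReal_le_s15 {m n : Type*} [Fintype m] [Fintype n] [DecidableEq n]
    (E : Matrix m n ℝ) : ‖E.map Complex.ofReal‖ ≤ ‖E‖ := by
  rw [l2_opNorm_def]
  refine ContinuousLinearMap.opNorm_le_bound _ (norm_nonneg E) fun x => ?_
  set xr : EuclideanSpace ℝ n := WithLp.toLp 2 (fun k => (x k).re)
  set xi : EuclideanSpace ℝ n := WithLp.toLp 2 (fun k => (x k).im)
  set y : EuclideanSpace ℂ m := WithLp.toLp 2 (E.map Complex.ofReal *ᵥ x.ofLp)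
  have hre : WithLp.toLp 2 (fun k => (y k).re) = WithLp.toLp 2 (E *ᵥ xr.ofLp) := by
    ext k; simp [y, xr, mulVec, dotProduct, Complex.re_sum]
  have him : WithLp.toLp 2 (fun k => (y k).im) = WithLp.toLp 2 (E *ᵥ xi.ofLp) := by
    ext k; simp [y, xi, mulVec, dotProduct, Complex.im_sum]
  have hsq : ‖y‖ ^ 2 ≤ (‖E‖ * ‖x‖) ^ 2 :=
    calc ‖y‖ ^ 2 = ‖WithLp.toLp 2 (E *ᵥ xr.ofLp)‖ ^ 2 + ‖WithLp.toLp 2 (E *ᵥ xi.ofLp)‖ ^ 2 := by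
          rw [EuclideanSpace.norm_sq_eq_norm_sq_re_add_norm_sq_im, hre, him]
      _ ≤ (‖E‖ * ‖xr‖) ^ 2 + (‖E‖ * ‖xi‖) ^ 2 := by
          gcongr <;> exact l2_opNorm_mulVec E _
      _ = (‖E‖ * ‖x‖) ^ 2 := by
          rw [mul_pow, mul_pow, mul_pow, ← mul_add,
            EuclideanSpace.norm_sq_eq_norm_sq_re_add_norm_sq_im x]
  exact (pow_le_pow_iff_left₀ (norm_nonneg _) (by positivity) two_ne_zero).mp hsq

open InnerProductSpace in
theorem norm_sum_smul_rankOne_le {𝕜 E ι : Type*} [RCLike 𝕜] [NormedAddCommGroup E]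
    [InnerProductSpace 𝕜 E] [Fintype ι] {w : ι → E} (hw : Orthonormal 𝕜 w) {c : ι → 𝕜}
    {B : ℝ} (hB : 0 ≤ B) (hc : ∀ i, ‖c i‖ ≤ B) :
    ‖∑ i, c i • rankOne 𝕜 (w i) (w i)‖ ≤ B := by
  refine ContinuousLinearMap.opNorm_le_bound _ hB fun x => ?_
  have hx : (∑ i, c i • rankOne 𝕜 (w i) (w i)) x = ∑ i, (c i * inner 𝕜 (w i) x) • w i := by
    simp [rankOne_apply, mul_smul]
  have hsq : ‖∑ i, (c i * inner 𝕜 (w i) x) • w i‖ ^ 2 ≤ (B * ‖x‖) ^ 2 :=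
    calc ‖∑ i, (c i * inner 𝕜 (w i) x) • w i‖ ^ 2
        = ∑ i, ‖c i * inner 𝕜 (w i) x‖ ^ 2 := by
          simpa using hw.orthogonalFamily.norm_sum (fun i => c i * inner 𝕜 (w i) x) univ
      _ ≤ ∑ i, B ^ 2 * ‖inner 𝕜 (w i) x‖ ^ 2 := by
          refine sum_le_sum fun i _ => ?_
          rw [norm_mul, mul_pow]
          gcongr
          exact hc i
      _ ≤ (B * ‖x‖) ^ 2 := by
          rw [← mul_sum, mul_pow]
          gcongr
          exact hw.sum_inner_products_le x
  rw [hx]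
  exact (pow_le_pow_iff_left₀ (norm_nonneg _) (by positivity) two_ne_zero).mp hsq

theorem Matrix.toEuclideanCLM_symm_toEuclideanLin {𝕜 m : Type*} [RCLike 𝕜] [Fintype m]
    [DecidableEq m] (f : EuclideanSpace 𝕜 m →L[𝕜] EuclideanSpace 𝕜 m) :
    toEuclideanCLM (n := m) (𝕜 := 𝕜) (toEuclideanLin.symm f) = f :=
  ContinuousLinearMap.coe_inj.mp <| by
    rw [coe_toEuclideanCLM_eq_toEuclideanLin, LinearEquiv.apply_symm_apply]

open InnerProductSpace in
theorem Matrix.l2_opNorm_sum_smul_vecMulVec_map_ofReal_le {ι m : Type*} [Fintype m]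
    [DecidableEq m] [DecidableEq ι] {s : Finset ι} {u : ι → m → ℝ}
    (hu : ∀ i ∈ s, ∀ j ∈ s, u i ⬝ᵥ u j = if i = j then 1 else 0) {c : ι → ℂ} {B : ℝ}
    (hB : 0 ≤ B) (hc : ∀ i ∈ s, ‖c i‖ ≤ B) :
    ‖∑ i ∈ s, c i • (vecMulVec (u i) (u i)).map Complex.ofReal‖ ≤ B := by
  set w : ι → EuclideanSpace ℂ m := fun i => WithLp.toLp 2 (fun k => (u i k : ℂ))
  have hw : Orthonormal ℂ (fun i : s => w i) := by
    rw [orthonormal_iff_ite]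
    intro i j
    have hinner : inner ℂ (w i) (w j) = ((u i ⬝ᵥ u j : ℝ) : ℂ) := by
      simp [w, PiLp.inner_apply, dotProduct, mul_comm]
    rw [hinner, hu i i.2 j j.2]
    by_cases h : i = j
    · simp [h]
    · simp [h, Subtype.coe_ne_coe.mpr h]
  have hrank : ∀ i, (vecMulVec (u i) (u i)).map Complex.ofReal
      = toEuclideanLin.symm (rankOne ℂ (w i) (w i) : EuclideanSpace ℂ m →ₗ[ℂ] _) := by
    intro i
    rw [symm_toEuclideanLin_rankOne]
    ext k l
    simp [w, vecMulVec_apply]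
  rw [← l2_opNorm_toEuclideanCLM, ← sum_coe_sort s]
  simp only [hrank, map_sum, map_smul, toEuclideanCLM_symm_toEuclideanLin]
  exact norm_sum_smul_rankOne_le hw hB fun i => hc i i.2

theorem Matrix.vecMulVec_mul_mul_vecMulVec {m R : Type*} [Fintype m] [CommSemiring R]
    (a b c d : m → R) (M : Matrix m m R) :
    vecMulVec a b * M * vecMulVec c d = (b ⬝ᵥ M *ᵥ c) • vecMulVec a d := by
  rw [vecMulVec_mul, vecMulVec_mul_vecMulVec, vecMulVec_smul, dotProduct_mulVec]

theorem Matrix.map_ofReal_vecMulVec {m n : Type*} (a : m → ℝ) (b : n → ℝ) :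
    (vecMulVec a b).map Complex.ofReal
      = vecMulVec (fun k => (a k : ℂ)) (fun k => (b k : ℂ)) := by
  ext; simp [vecMulVec_apply]

theorem Matrix.sum_product_smul_vecMulVec_map_ofReal {ι m : Type*} [Fintype m]
    (E : Matrix m m ℝ) (u : ι → m → ℝ) (c : ι → ℂ) (s t : Finset ι) :
    ∑ q ∈ s ×ˢ t, (c q.1 * c q.2 * ((u q.1 ⬝ᵥ E *ᵥ u q.2 : ℝ) : ℂ)) •
        (vecMulVec (u q.1) (u q.2)).map Complex.ofReal
      = (∑ i ∈ s, c i • (vecMulVec (u i) (u i)).map Complex.ofReal) * E.map Complex.ofReal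
        * ∑ j ∈ t, c j • (vecMulVec (u j) (u j)).map Complex.ofReal := by
  have hE : ∀ i j, ((u i ⬝ᵥ E *ᵥ u j : ℝ) : ℂ)
      = (fun k => (u i k : ℂ)) ⬝ᵥ E.map Complex.ofReal *ᵥ fun k => (u j k : ℂ) := by
    intro i j
    simp [dotProduct, mulVec]
  rw [sum_mul, sum_mul, sum_product]
  refine sum_congr rfl fun i _ => ?_
  rw [mul_sum]
  refine sum_congr rfl fun j _ => ?_
  simp only [smul_mul_assoc, mul_smul_comm, map_ofReal_vecMulVec, vecMulVec_mul_mul_vecMulVec,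
    smul_smul, hE]
  ring_nf

/-- The block of `(z - A)⁻¹` on `span {u i | i ∈ s}`. -/
noncomputable def resolventBlock {n : ℕ} (lam : ℕ → ℝ) (u : ℕ → Fin n → ℝ) (s : Finset ℕ)
    (z : ℂ) : Matrix (Fin n) (Fin n) ℂ :=
  ∑ i ∈ s, (z - lam i)⁻¹ • (vecMulVec (u i) (u i)).map Complex.ofReal

noncomputable def crossTerm {n : ℕ} (E : Matrix (Fin n) (Fin n) ℝ) (lam : ℕ → ℝ)
    (u : ℕ → Fin n → ℝ) (r : ℕ) (z : ℂ) : Matrix (Fin n) (Fin n) ℂ :=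
  ∑ q ∈ (Icc 1 n ×ˢ Icc 1 n).filter (fun q => (q.1 ≤ r ∧ r < q.2) ∨ (r < q.1 ∧ q.2 ≤ r)),
    (((u q.1 ⬝ᵥ E *ᵥ u q.2 : ℝ) : ℂ) / ((z - lam q.1) * (z - lam q.2))) •
      (vecMulVec (u q.1) (u q.2)).map Complex.ofReal

theorem crossTerm_eq {n r : ℕ} (hrn : r ≤ n) (E : Matrix (Fin n) (Fin n) ℝ) (lam : ℕ → ℝ)
    (u : ℕ → Fin n → ℝ) (z : ℂ) :
    crossTerm E lam u r z
      = resolventBlock lam u (Icc 1 r) z * E.map Complex.ofReal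
          * resolventBlock lam u (Icc (r + 1) n) z
        + resolventBlock lam u (Icc (r + 1) n) z * E.map Complex.ofReal
          * resolventBlock lam u (Icc 1 r) z := by
  have hsplit : (Icc 1 n ×ˢ Icc 1 n).filter (fun q => (q.1 ≤ r ∧ r < q.2) ∨ (r < q.1 ∧ q.2 ≤ r))
      = Icc 1 r ×ˢ Icc (r + 1) n ∪ Icc (r + 1) n ×ˢ Icc 1 r := by
    ext q
    simp only [mem_filter, mem_product, mem_union, mem_Icc]
    omega
  have hdisj : Disjoint (Icc 1 r ×ˢ Icc (r + 1) n) (Icc (r + 1) n ×ˢ Icc 1 r) := by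
    rw [disjoint_left]
    intro q hq hq'
    simp only [mem_product, mem_Icc] at hq hq'
    omega
  simp only [crossTerm, resolventBlock, hsplit, sum_union hdisj,
    ← sum_product_smul_vecMulVec_map_ofReal, div_eq_inv_mul, mul_inv]

theorem specNorm_crossTerm_le {n r : ℕ} (hrn : r ≤ n) (E : Matrix (Fin n) (Fin n) ℝ)
    {lam : ℕ → ℝ} {u : ℕ → Fin n → ℝ}
    (hu : ∀ i ∈ Icc 1 n, ∀ j ∈ Icc 1 n, u i ⬝ᵥ u j = if i = j then 1 else 0)
    {z : ℂ} {B₁ B₂ : ℝ} (hB₁ : 0 ≤ B₁) (hB₂ : 0 ≤ B₂)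
    (h₁ : ∀ i ∈ Icc 1 r, ‖(z - lam i)⁻¹‖ ≤ B₁) (h₂ : ∀ j ∈ Icc (r + 1) n, ‖(z - lam j)⁻¹‖ ≤ B₂) :
    specNorm (crossTerm E lam u r z) ≤ 2 * (B₁ * specNorm E * B₂) := by
  have hsub : ∀ {s : Finset ℕ}, s ⊆ Icc 1 n →
      ∀ i ∈ s, ∀ j ∈ s, u i ⬝ᵥ u j = if i = j then 1 else 0 :=
    fun hs i hi j hj => hu i (hs hi) j (hs hj)
  have hR₁ : ‖resolventBlock lam u (Icc 1 r) z‖ ≤ B₁ :=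
    l2_opNorm_sum_smul_vecMulVec_map_ofReal_le (hsub (Icc_subset_Icc_right hrn)) hB₁ h₁
  have hR₂ : ‖resolventBlock lam u (Icc (r + 1) n) z‖ ≤ B₂ :=
    l2_opNorm_sum_smul_vecMulVec_map_ofReal_le (hsub (Icc_subset_Icc_left (by omega))) hB₂ h₂
  have hE := l2_opNorm_map_ofReal_le_s15 E
  rw [specNorm_eq_norm, specNorm_eq_norm, crossTerm_eq hrn]
  calc _ ≤ ‖resolventBlock lam u (Icc 1 r) z‖ * ‖E.map Complex.ofReal‖
          * ‖resolventBlock lam u (Icc (r + 1) n) z‖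
        + ‖resolventBlock lam u (Icc (r + 1) n) z‖ * ‖E.map Complex.ofReal‖
          * ‖resolventBlock lam u (Icc 1 r) z‖ :=
        norm_add_le_of_le (norm_mul₃_le ..) (norm_mul₃_le ..)
    _ ≤ B₁ * ‖E‖ * B₂ + B₂ * ‖E‖ * B₁ := by gcongr
    _ = 2 * (B₁ * ‖E‖ * B₂) := by ring

theorem norm_inv_ofReal_add_mul_I_sub_le {x t μ a : ℝ} (ha : 0 < a) (h : a ≤ |x - μ|) :
    ‖((x : ℂ) + t * Complex.I - μ)⁻¹‖ ≤ (√(a ^ 2 + t ^ 2))⁻¹ := by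
  have hz : (x : ℂ) + t * Complex.I - μ = ((x - μ : ℝ) : ℂ) + t * Complex.I := by
    push_cast; ring
  rw [norm_inv, hz, Complex.norm_add_mul_I]
  refine inv_anti₀ (by positivity) (Real.sqrt_le_sqrt ?_)
  nlinarith [sq_abs (x - μ), pow_le_pow_left₀ ha.le h 2]

theorem half_gap_le_abs_midpoint_sub {n p : ℕ} {lam : ℕ → ℝ}
    (hmono : ∀ i ∈ Icc 1 n, ∀ j ∈ Icc 1 n, i ≤ j → lam j ≤ lam i) (hp1 : 1 ≤ p) (hpn : p < n)
    {i : ℕ} (hi : i ∈ Icc 1 n) :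
    (lam p - lam (p + 1)) / 2 ≤ |lam p - (lam p - lam (p + 1)) / 2 - lam i| := by
  have hp : p ∈ Icc 1 n := mem_Icc.2 ⟨hp1, hpn.le⟩
  have hp' : p + 1 ∈ Icc 1 n := mem_Icc.2 ⟨by omega, hpn⟩
  rcases le_or_gt i p with h | h
  · exact le_abs.2 (Or.inr (by linarith [hmono i hi p hp h]))
  · exact le_abs.2 (Or.inl (by linarith [hmono (p + 1) hp' i hi h]))

theorem integral_inv_sqrt_sq_add_sq {a : ℝ} (ha : 0 < a) (T : ℝ) :
    ∫ t in (-T)..T, (√(a ^ 2 + t ^ 2))⁻¹ = 2 * Real.arsinh (T / a) := by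
  have hderiv : ∀ t : ℝ, HasDerivAt (fun s => Real.arsinh (s / a)) (√(a ^ 2 + t ^ 2))⁻¹ t := by
    intro t
    refine ((Real.hasDerivAt_arsinh (t / a)).comp t ((hasDerivAt_id t).div_const a)).congr_deriv ?_
    have hsqrt : √(a ^ 2 + t ^ 2) = √(1 + (t / a) ^ 2) * a := by
      rw [show 1 + (t / a) ^ 2 = (a ^ 2 + t ^ 2) / a ^ 2 by field_simp,
        Real.sqrt_div (by positivity), Real.sqrt_sq ha.le, div_mul_cancel₀ _ ha.ne']
    rw [hsqrt, mul_inv]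
    simp [div_eq_mul_inv]
  have hcont : Continuous fun t : ℝ => (√(a ^ 2 + t ^ 2))⁻¹ :=
    Continuous.inv₀ (by fun_prop) fun t => by positivity
  rw [intervalIntegral.integral_eq_sub_of_hasDerivAt (fun t _ => hderiv t)
    (hcont.intervalIntegrable _ _), neg_div, Real.arsinh_neg]
  ring

theorem arsinh_le_two_mul_log_add_one {x : ℝ} (hx : 0 ≤ x) :
    Real.arsinh x ≤ 2 * Real.log (x + 1) := by
  have hsqrt : √(1 + x ^ 2) ≤ x + 1 := Real.sqrt_le_iff.2 ⟨by linarith, by nlinarith⟩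
  calc Real.arsinh x ≤ Real.log ((x + 1) ^ 2) :=
        Real.log_le_log (by positivity) (by nlinarith)
    _ = 2 * Real.log (x + 1) := by simp [Real.log_pow]

theorem intervalIntegral_le_of_le_mul_inv_sqrt {f : ℝ → ℝ} {a C T : ℝ} (ha : 0 < a)
    (hT : 0 ≤ T) (hC : 0 ≤ C) (hf₀ : ∀ t, 0 ≤ f t) (hf : ∀ t, f t ≤ C * (√(a ^ 2 + t ^ 2))⁻¹) :
    ∫ t in (-T)..T, f t ≤ 4 * C * Real.log (T / a + 1) := by
  have hg : Continuous fun t : ℝ => C * (√(a ^ 2 + t ^ 2))⁻¹ :=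
    continuous_const.mul (Continuous.inv₀ (by fun_prop) fun t => by positivity)
  have hTT : -T ≤ T := by linarith
  calc ∫ t in (-T)..T, f t ≤ ∫ t in (-T)..T, C * (√(a ^ 2 + t ^ 2))⁻¹ := by
        rw [intervalIntegral.integral_of_le hTT, intervalIntegral.integral_of_le hTT]
        exact MeasureTheory.setIntegral_mono_of_nonneg (fun t _ => hf₀ t) (fun t _ => hf t)
          (hg.intervalIntegrable _ _).1
    _ = C * (2 * Real.arsinh (T / a)) := by
        rw [intervalIntegral.integral_const_mul, integral_inv_sqrt_sq_add_sq ha]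
    _ ≤ C * (2 * (2 * Real.log (T / a + 1))) := by
        gcongr
        exact arsinh_le_two_mul_log_add_one (by positivity)
    _ = 4 * C * Real.log (T / a + 1) := by ring

theorem M1_cross_term_bound_general
    {n : ℕ} (A E : Matrix (Fin n) (Fin n) ℝ)
    (lam : ℕ → ℝ)
    (hlam_mono : ∀ i ∈ Finset.Icc 1 n, ∀ j ∈ Finset.Icc 1 n, i ≤ j → lam j ≤ lam i)
    (u : ℕ → (Fin n → ℝ))
    (hu_on : ∀ i ∈ Finset.Icc 1 n, ∀ j ∈ Finset.Icc 1 n,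
      u i ⬝ᵥ u j = if i = j then 1 else 0)
    (p : ℕ) (hp1 : 1 ≤ p) (hpn : p < n)
    (r : ℕ) (hrn : r < n)
    (hr_half : |lam p| / 2 ≤ lam p - lam (r + 1))
    (δp : ℝ) (hδp : δp = lam p - lam (p + 1))
    (hE_pos : 0 < specNorm E)
    (hgap_lo : 4 * specNorm E ≤ δp) (hgap_hi : δp ≤ |lam p| / 4)
    (x₀ T : ℝ) (hx₀ : x₀ = lam p - δp / 2) (hT : T = 2 * specNorm A) :
    (∫ t in (-T)..T, specNorm
      (∑ q ∈ (Finset.Icc 1 n ×ˢ Finset.Icc 1 n).filter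
          (fun q => (q.1 ≤ r ∧ r < q.2) ∨ (r < q.1 ∧ q.2 ≤ r)),
        (((u q.1 ⬝ᵥ E *ᵥ u q.2 : ℝ) : ℂ) /
            (((x₀ : ℂ) + t * Complex.I - (lam q.1 : ℂ))
              * ((x₀ : ℂ) + t * Complex.I - (lam q.2 : ℂ)))) •
          (vecMulVec (u q.1) (u q.2)).map Complex.ofReal))
      ≤ 64 * specNorm E / |lam p| * Real.log ((2 * T + δp) / δp) := by
  change ∫ t in (-T)..T, specNorm (crossTerm E lam u r (x₀ + t * Complex.I)) ≤ _
  have hδ : 0 < δp := by linarith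
  have hlam : 0 < |lam p| := by linarith
  have hT₀ : 0 ≤ T := hT ▸ mul_nonneg zero_le_two (norm_nonneg _)
  have hfar : ∀ j ∈ Icc (r + 1) n, 3 * |lam p| / 8 ≤ |x₀ - lam j| := fun j hj =>
    le_abs.2 <| Or.inl <| by
      linarith [hlam_mono (r + 1) (mem_Icc.2 ⟨by omega, hrn⟩) j
        (Icc_subset_Icc_left (by omega) hj) (mem_Icc.1 hj).1]
  have hpoint : ∀ t : ℝ, specNorm (crossTerm E lam u r (x₀ + t * Complex.I))
      ≤ 16 * specNorm E / (3 * |lam p|) * (√((δp / 2) ^ 2 + t ^ 2))⁻¹ := fun t =>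
    calc _ ≤ 2 * ((√((δp / 2) ^ 2 + t ^ 2))⁻¹ * specNorm E * (3 * |lam p| / 8)⁻¹) := by
          refine specNorm_crossTerm_le hrn.le E hu_on (by positivity) (by positivity)
            (fun i hi => norm_inv_ofReal_add_mul_I_sub_le (by positivity) ?_)
            (fun j hj => (norm_inv_ofReal_add_mul_I_sub_le (by positivity) (hfar j hj)).trans ?_)
          · subst hx₀ hδp
            exact half_gap_le_abs_midpoint_sub hlam_mono hp1 hpn (Icc_subset_Icc_right hrn.le hi)
          · exact inv_anti₀ (by positivity) (Real.le_sqrt_of_sq_le (by nlinarith))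
      _ = _ := by field_simp; ring
  calc _ ≤ 4 * (16 * specNorm E / (3 * |lam p|)) * Real.log (T / (δp / 2) + 1) :=
        intervalIntegral_le_of_le_mul_inv_sqrt (by positivity) hT₀ (by positivity)
          (fun _ => norm_nonneg _) hpoint
    _ ≤ 64 * specNorm E / |lam p| * Real.log ((2 * T + δp) / δp) := by
        rw [show T / (δp / 2) + 1 = (2 * T + δp) / δp by field_simp]
        refine mul_le_mul_of_nonneg_right ?_ (Real.log_nonneg ?_)
        · rw [← mul_div_assoc, div_le_div_iff₀ (by positivity) hlam]
          nlinarith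
        · rw [le_div_iff₀ hδ]; linarith

/-- **Bound on the cross term of `M₁`** (pairs `(i,j)` with exactly one of `i, j`
in `{1,…,r}`). Indices are 1-based; `σ₁ = ‖A‖`, `x₀ = λ_p − δ_p/2`, `T = 2σ₁`. -/
theorem M1_cross_term_bound
    {n : ℕ} (A E : Matrix (Fin n) (Fin n) ℝ) (hA : A.IsSymm) (hE : E.IsSymm)
    (lam : ℕ → ℝ)
    (hlam_mono : ∀ i ∈ Finset.Icc 1 n, ∀ j ∈ Finset.Icc 1 n, i ≤ j → lam j ≤ lam i)
    (u : ℕ → (Fin n → ℝ))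
    (hu_on : ∀ i ∈ Finset.Icc 1 n, ∀ j ∈ Finset.Icc 1 n,
      u i ⬝ᵥ u j = if i = j then 1 else 0)
    (hu_eig : ∀ i ∈ Finset.Icc 1 n, A *ᵥ u i = lam i • u i)
    (p : ℕ) (hp1 : 1 ≤ p) (hpn : p < n)
    (r : ℕ) (hpr : p ≤ r) (hrn : r < n)
    (hr_half : |lam p| / 2 ≤ lam p - lam (r + 1))
    (δp : ℝ) (hδp : δp = lam p - lam (p + 1))
    (hE_pos : 0 < specNorm E)
    (hgap_lo : 4 * specNorm E ≤ δp) (hgap_hi : δp ≤ |lam p| / 4)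
    (x₀ T : ℝ) (hx₀ : x₀ = lam p - δp / 2) (hT : T = 2 * specNorm A) :
    (∫ t in (-T)..T, specNorm
      (∑ q ∈ (Finset.Icc 1 n ×ˢ Finset.Icc 1 n).filter
          (fun q => (q.1 ≤ r ∧ r < q.2) ∨ (r < q.1 ∧ q.2 ≤ r)),
        (((u q.1 ⬝ᵥ E *ᵥ u q.2 : ℝ) : ℂ) /
            (((x₀ : ℂ) + t * Complex.I - (lam q.1 : ℂ))
              * ((x₀ : ℂ) + t * Complex.I - (lam q.2 : ℂ)))) •
          (vecMulVec (u q.1) (u q.2)).map Complex.ofReal))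
      ≤ 64 * specNorm E / |lam p| * Real.log ((2 * T + δp) / δp) :=
  M1_cross_term_bound_general A E lam hlam_mono u hu_on p hp1 hpn r hrn hr_half δp hδp hE_pos
    hgap_lo hgap_hi x₀ T hx₀ hT
end
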